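/- Let h be an n-dimensional Leibniz algebra with universal algebra A(h) = k[X_{ij}]/J. Then the comultiplication Δ(x_{ij}) = Σ_s x_{is} ⊗ x_{sj} and counit ε(x_{ij}) = δ_{ij} are well-defined on A(h) (i.e., the bialgebra structure of the matrix bialgebra M(n) = k[X_{ij}] descends to the quotient), making A(h) a commutative bialgebra and the projection π : M(n) → A(h) a bialgebra homomorphism. -/

import Mathlib

open TensorProduct MvPolynomial

/-- The universal polynomial `P_{(a,i,j)} = Σ_u β^u_{ij} X_{au} - Σ_{s,t} τ^a_{st} X_{si} X_{tj}`. -/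
noncomputable def univPoly {k : Type*} [Field k] {n : ℕ} {I : Type*}
    (τ : Fin n → Fin n → Fin n → k) (β : I → I → I →₀ k)
    (a : Fin n) (i j : I) : MvPolynomial (Fin n × I) k :=
  (β i j).sum (fun u c => C c * X (a, u)) -
    ∑ s : Fin n, ∑ t : Fin n, C (τ s t a) * X (s, i) * X (t, j)

/-- The ideal generated by the universal polynomials. -/
noncomputable def univIdeal {k : Type*} [Field k] {n : ℕ} {I : Type*}
    (τ : Fin n → Fin n → Fin n → k) (β : I → I → I →₀ k) :
    Ideal (MvPolynomial (Fin n × I) k) :=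
  Ideal.span (Set.range fun p : Fin n × I × I => univPoly τ β p.1 p.2.1 p.2.2)

/-- The universal algebra `A(h,g)`. -/
noncomputable abbrev univAlg {k : Type*} [Field k] {n : ℕ} {I : Type*}
    (τ : Fin n → Fin n → Fin n → k) (β : I → I → I →₀ k) :=
  MvPolynomial (Fin n × I) k ⧸ univIdeal τ β

/-- The generator `x_{si}` of `A(h,g)`. -/
noncomputable def univGen {k : Type*} [Field k] {n : ℕ} {I : Type*}
    (τ : Fin n → Fin n → Fin n → k) (β : I → I → I →₀ k)
    (s : Fin n) (i : I) : univAlg τ β :=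
  Ideal.Quotient.mk (univIdeal τ β) (X (s, i))

/-- The universal ideal of a single `n`-dimensional Leibniz algebra `h`
(with structure constants `τ`), inside `M(n) = k[X_{ij}]`. -/
noncomputable abbrev univIdealH {k : Type*} [Field k] {n : ℕ}
    (τ : Fin n → Fin n → Fin n → k) : Ideal (MvPolynomial (Fin n × Fin n) k) :=
  univIdeal τ (fun i j => Finsupp.equivFunOnFinite.symm (τ i j))

/-- The universal algebra `A(h) = A(h,h)` of an `n`-dimensional Leibniz algebra. -/
noncomputable abbrev univAlgH {k : Type*} [Field k] {n : ℕ}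
    (τ : Fin n → Fin n → Fin n → k) :=
  univAlg τ (fun i j => Finsupp.equivFunOnFinite.symm (τ i j))

/-- The generator `x_{ij}` of `A(h)`. -/
noncomputable abbrev univGenH {k : Type*} [Field k] {n : ℕ}
    (τ : Fin n → Fin n → Fin n → k) (i j : Fin n) : univAlgH τ :=
  univGen τ (fun i j => Finsupp.equivFunOnFinite.symm (τ i j)) i j

/-- The comultiplication of the matrix bialgebra `M(n) = k[X_{ij}]`:
`Δ(X_{ij}) = Σ_s X_{is} ⊗ X_{sj}`. -/
noncomputable def deltaM (k : Type*) [Field k] (n : ℕ) :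
    MvPolynomial (Fin n × Fin n) k →ₐ[k]
      MvPolynomial (Fin n × Fin n) k ⊗[k] MvPolynomial (Fin n × Fin n) k :=
  MvPolynomial.aeval (fun p : Fin n × Fin n =>
    ∑ s : Fin n, MvPolynomial.X (p.1, s) ⊗ₜ[k] MvPolynomial.X (s, p.2))

/-- The counit of the matrix bialgebra `M(n)`: `ε(X_{ij}) = δ_{ij}`. -/
noncomputable def epsM (k : Type*) [Field k] (n : ℕ) :
    MvPolynomial (Fin n × Fin n) k →ₐ[k] k :=
  MvPolynomial.aeval (fun p : Fin n × Fin n => if p.1 = p.2 then 1 else 0)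

/-!
The universal polynomials are the entries `P_{aij} = D(X)_{aij}` of the defect
`D(Y)(e_i, e_j) = Y [e_i, e_j] - [Y e_i, Y e_j]` of the generic matrix `X`. Over any commutative
ring the defect of a product satisfies `D(Y Z) = Y ∘ D(Z) + D(Y) ∘ (Z × Z)` (the computation
showing that a composite of bracket morphisms is one). Since
`Δ X = (X ⊗ 1)(1 ⊗ X)` and `ε X = 1`, this gives `Δ(P) ∈ M(n) ⊗ J + J ⊗ M(n)` and `ε(P) = D(1) = 0`.
So `Δ` and `ε` descend to `A(h) = M(n)/J`, where coassociativity and counitality only need to be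
checked on the generators `x_{ij}`.
-/

section LeibnizDefect

variable {S : Type*} [CommRing S] {n : ℕ} (τ : Fin n → Fin n → Fin n → S)

/-- The `a`-th coordinate of `Y [e_i, e_j] - [Y e_i, Y e_j]` for the bracket
`[e_i, e_j] = ∑ u, τ i j u • e_u` on `S^n`. -/
def leibnizDefect (Y : Matrix (Fin n) (Fin n) S) (a i j : Fin n) : S :=
  ∑ u, τ i j u * Y a u - ∑ s, ∑ t, τ s t a * Y s i * Y t j

lemma leibnizDefect_one (a i j : Fin n) : leibnizDefect τ 1 a i j = 0 := by
  simp [leibnizDefect, Matrix.one_apply]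

lemma leibnizDefect_mul (Y Z : Matrix (Fin n) (Fin n) S) (a i j : Fin n) :
    leibnizDefect τ (Y * Z) a i j =
      ∑ s, Y a s * leibnizDefect τ Z s i j +
        ∑ p, ∑ q, leibnizDefect τ Y a p q * Z p i * Z q j := by
  simp only [leibnizDefect, Matrix.mul_apply, mul_sub, sub_mul, Finset.mul_sum, Finset.sum_mul,
    Finset.sum_sub_distrib]
  have linear : ∑ u, ∑ s, τ i j u * (Y a s * Z s u) = ∑ s, ∑ u, Y a s * (τ i j u * Z s u) := by
    rw [Finset.sum_comm]; simp only [mul_left_comm]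
  have cross : ∑ s, ∑ p, ∑ q, Y a s * (τ p q s * Z p i * Z q j) =
      ∑ p, ∑ q, ∑ u, τ p q u * Y a u * Z p i * Z q j := by
    rw [Finset.sum_comm]
    refine Finset.sum_congr rfl fun p _ => ?_
    rw [Finset.sum_comm]
    exact Finset.sum_congr rfl fun q _ => Finset.sum_congr rfl fun s _ => by ring
  have quadratic : ∑ s, ∑ t, ∑ q, ∑ p, τ s t a * (Y s p * Z p i) * (Y t q * Z q j) =
      ∑ p, ∑ q, ∑ s, ∑ t, τ s t a * Y s p * Y t q * Z p i * Z q j := by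
    simp only [← Fintype.sum_prod_type']
    exact Fintype.sum_equiv ⟨fun x => (x.2.2.2, x.2.2.1, x.1, x.2.1),
      fun y => (y.2.2.1, y.2.2.2, y.2.1, y.1), fun _ => rfl, fun _ => rfl⟩ _ _
      fun _ => by simp only [Equiv.coe_fn_mk]; ring
  rw [linear, cross, quadratic]
  ring

end LeibnizDefect

noncomputable abbrev univPolyH {k : Type*} [Field k] {n : ℕ} (τ : Fin n → Fin n → Fin n → k)
    (a i j : Fin n) : MvPolynomial (Fin n × Fin n) k :=
  univPoly τ (fun i j => Finsupp.equivFunOnFinite.symm (τ i j)) a i j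

section UniversalIdeal

variable {k : Type*} [Field k] {n : ℕ} (τ : Fin n → Fin n → Fin n → k)

lemma deltaM_X (i j : Fin n) : deltaM k n (X (i, j)) =
    ∑ s, (X (i, s) : MvPolynomial (Fin n × Fin n) k) ⊗ₜ[k] X (s, j) := by
  simp [deltaM]

lemma epsM_X (i j : Fin n) : epsM k n (X (i, j)) = if i = j then 1 else 0 := by
  simp [epsM]

lemma univPolyH_mem_univIdealH (a i j : Fin n) : univPolyH τ a i j ∈ univIdealH τ :=
  Ideal.subset_span ⟨(a, i, j), rfl⟩

lemma map_univPolyH {S : Type*} [CommRing S] [Algebra k S]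
    (f : MvPolynomial (Fin n × Fin n) k →ₐ[k] S) (a i j : Fin n) :
    f (univPolyH τ a i j) = leibnizDefect (fun s t u => algebraMap k S (τ s t u))
      (Matrix.of fun i j => f (X (i, j))) a i j := by
  simp [univPoly, leibnizDefect, Finsupp.sum_fintype, mul_assoc]

lemma epsM_univPolyH (a i j : Fin n) : epsM k n (univPolyH τ a i j) = 0 := by
  have : (Matrix.of fun i j => epsM k n (X (i, j))) = 1 := by
    ext i j
    simp [epsM_X, Matrix.one_apply]
  rw [map_univPolyH, this, leibnizDefect_one]

lemma deltaM_univPolyH_mem (a i j : Fin n) :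
    deltaM k n (univPolyH τ a i j) ∈
      Ideal.map (Algebra.TensorProduct.includeLeft :
          MvPolynomial (Fin n × Fin n) k →ₐ[k] _) (univIdealH τ) ⊔
        Ideal.map (Algebra.TensorProduct.includeRight :
          MvPolynomial (Fin n × Fin n) k →ₐ[k] _) (univIdealH τ) := by
  set L := Matrix.of fun i j => Algebra.TensorProduct.includeLeft (R := k) (S := k)
    (B := MvPolynomial (Fin n × Fin n) k) (X (i, j) : MvPolynomial (Fin n × Fin n) k) with hL
  set R := Matrix.of fun i j => Algebra.TensorProduct.includeRight (R := k)
    (A := MvPolynomial (Fin n × Fin n) k) (X (i, j) : MvPolynomial (Fin n × Fin n) k) with hR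
  have hΔ : (Matrix.of fun i j => deltaM k n (X (i, j))) = L * R := by
    ext i j
    simp [L, R, deltaM_X, Matrix.mul_apply, Algebra.TensorProduct.tmul_mul_tmul]
  rw [map_univPolyH, hΔ, leibnizDefect_mul]
  refine add_mem (Ideal.sum_mem _ fun s _ => Ideal.mem_sup_right ?_)
    (Ideal.sum_mem _ fun p _ => Ideal.sum_mem _ fun q _ => Ideal.mem_sup_left ?_)
  · rw [hR, ← map_univPolyH]
    exact Ideal.mul_mem_left _ _ (Ideal.mem_map_of_mem _ (univPolyH_mem_univIdealH τ s i j))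
  · rw [hL, ← map_univPolyH, mul_assoc]
    exact Ideal.mul_mem_right _ _ (Ideal.mem_map_of_mem _ (univPolyH_mem_univIdealH τ a p q))

end UniversalIdeal

section UniversalAlgebra

variable {k : Type*} [Field k] {n : ℕ} (τ : Fin n → Fin n → Fin n → k)

lemma deltaM_mem_of_mem_univIdealH {p : MvPolynomial (Fin n × Fin n) k} (hp : p ∈ univIdealH τ) :
    deltaM k n p ∈
      Ideal.map (Algebra.TensorProduct.includeLeft :
          MvPolynomial (Fin n × Fin n) k →ₐ[k] _) (univIdealH τ) ⊔
        Ideal.map (Algebra.TensorProduct.includeRight :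
          MvPolynomial (Fin n × Fin n) k →ₐ[k] _) (univIdealH τ) := by
  refine Ideal.mem_comap.mp ((Ideal.span_le (I := Ideal.comap (deltaM k n) _)).mpr ?_ hp)
  rintro _ ⟨⟨a, i, j⟩, rfl⟩
  exact deltaM_univPolyH_mem τ a i j

lemma epsM_eq_zero_of_mem_univIdealH {p : MvPolynomial (Fin n × Fin n) k}
    (hp : p ∈ univIdealH τ) : epsM k n p = 0 := by
  refine (Ideal.span_le (I := RingHom.ker (epsM k n))).mpr ?_ hp
  rintro _ ⟨⟨a, i, j⟩, rfl⟩
  exact epsM_univPolyH τ a i j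

lemma map_mkₐ_deltaM_eq_zero {p : MvPolynomial (Fin n × Fin n) k} (hp : p ∈ univIdealH τ) :
    Algebra.TensorProduct.map (Ideal.Quotient.mkₐ k (univIdealH τ))
      (Ideal.Quotient.mkₐ k (univIdealH τ)) (deltaM k n p) = 0 := by
  have hker : RingHom.ker (Ideal.Quotient.mkₐ k (univIdealH τ)) = univIdealH τ :=
    Ideal.Quotient.mkₐ_ker k _
  rw [← RingHom.mem_ker, Algebra.TensorProduct.map_ker _ _ (Ideal.Quotient.mkₐ_surjective k _)
    (Ideal.Quotient.mkₐ_surjective k _), hker]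
  exact deltaM_mem_of_mem_univIdealH τ hp

noncomputable def univAlgHComul : univAlgH τ →ₐ[k] univAlgH τ ⊗[k] univAlgH τ :=
  Ideal.Quotient.liftₐ _ ((Algebra.TensorProduct.map (Ideal.Quotient.mkₐ k (univIdealH τ))
    (Ideal.Quotient.mkₐ k (univIdealH τ))).comp (deltaM k n))
    fun _ => map_mkₐ_deltaM_eq_zero τ

noncomputable def univAlgHCounit : univAlgH τ →ₐ[k] k :=
  Ideal.Quotient.liftₐ _ (epsM k n) fun _ => epsM_eq_zero_of_mem_univIdealH τ

lemma univAlgHComul_comp_mkₐ :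
    (univAlgHComul τ).comp (Ideal.Quotient.mkₐ k (univIdealH τ)) =
      (Algebra.TensorProduct.map (Ideal.Quotient.mkₐ k (univIdealH τ))
        (Ideal.Quotient.mkₐ k (univIdealH τ))).comp (deltaM k n) :=
  Ideal.Quotient.liftₐ_comp _ _ _

lemma univAlgHCounit_comp_mkₐ :
    (univAlgHCounit τ).comp (Ideal.Quotient.mkₐ k (univIdealH τ)) = epsM k n :=
  Ideal.Quotient.liftₐ_comp _ _ _

lemma univAlgHComul_univGenH (i j : Fin n) :
    univAlgHComul τ (univGenH τ i j) = ∑ s, univGenH τ i s ⊗ₜ[k] univGenH τ s j := by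
  simpa [univGenH, univGen, deltaM_X] using AlgHom.congr_fun (univAlgHComul_comp_mkₐ τ) (X (i, j))

lemma univAlgHCounit_univGenH (i j : Fin n) :
    univAlgHCounit τ (univGenH τ i j) = if i = j then 1 else 0 := by
  simpa [univGenH, univGen, epsM_X] using AlgHom.congr_fun (univAlgHCounit_comp_mkₐ τ) (X (i, j))

lemma univAlgH_algHom_ext {B : Type*} [Semiring B] [Algebra k B] {f g : univAlgH τ →ₐ[k] B}
    (h : ∀ i j, f (univGenH τ i j) = g (univGenH τ i j)) : f = g :=
  Ideal.Quotient.algHom_ext _ (MvPolynomial.algHom_ext fun p => h p.1 p.2)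

lemma univAlgHComul_coassoc :
    (Algebra.TensorProduct.assoc k k k (univAlgH τ) (univAlgH τ) (univAlgH τ)).toAlgHom.comp
        ((Algebra.TensorProduct.map (univAlgHComul τ) (.id k _)).comp (univAlgHComul τ)) =
      (Algebra.TensorProduct.map (.id k _) (univAlgHComul τ)).comp (univAlgHComul τ) := by
  refine univAlgH_algHom_ext τ fun i j => ?_
  simp only [AlgHom.coe_comp, AlgEquiv.coe_toAlgHom, Function.comp_apply, univAlgHComul_univGenH,
    map_sum, Algebra.TensorProduct.map_tmul, AlgHom.coe_id, id_eq, sum_tmul,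
    Algebra.TensorProduct.assoc_tmul, tmul_sum]
  exact Finset.sum_comm

lemma univAlgHCounit_rTensor_comul :
    (Algebra.TensorProduct.map (univAlgHCounit τ) (.id k _)).comp (univAlgHComul τ) =
      (Algebra.TensorProduct.lid k (univAlgH τ)).symm := by
  refine univAlgH_algHom_ext τ fun i j => ?_
  simp [univAlgHComul_univGenH, univAlgHCounit_univGenH, ite_tmul]

lemma univAlgHCounit_lTensor_comul :
    (Algebra.TensorProduct.map (.id k _) (univAlgHCounit τ)).comp (univAlgHComul τ) =
      (Algebra.TensorProduct.rid k k (univAlgH τ)).symm := by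
  refine univAlgH_algHom_ext τ fun i j => ?_
  simp [univAlgHComul_univGenH, univAlgHCounit_univGenH, tmul_ite]

noncomputable abbrev univAlgHBialgebra : Bialgebra k (univAlgH τ) :=
  Bialgebra.ofAlgHom (univAlgHComul τ) (univAlgHCounit τ) (univAlgHComul_coassoc τ)
    (univAlgHCounit_rTensor_comul τ) (univAlgHCounit_lTensor_comul τ)

end UniversalAlgebra

theorem stmt_12 (k : Type*) [Field k] (n : ℕ) (τ : Fin n → Fin n → Fin n → k) :
    (∀ p ∈ univIdealH τ, deltaM k n p ∈
        Ideal.map (Algebra.TensorProduct.includeLeft :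
          MvPolynomial (Fin n × Fin n) k →ₐ[k] _) (univIdealH τ) ⊔
        Ideal.map (Algebra.TensorProduct.includeRight :
          MvPolynomial (Fin n × Fin n) k →ₐ[k] _) (univIdealH τ)) ∧
    (∀ p ∈ univIdealH τ, epsM k n p = 0) ∧
    ∃ (ΔA : univAlgH τ →ₐ[k] univAlgH τ ⊗[k] univAlgH τ) (εA : univAlgH τ →ₐ[k] k),
      (∀ i j : Fin n, ΔA (univGenH τ i j) =
        ∑ s : Fin n, univGenH τ i s ⊗ₜ[k] univGenH τ s j) ∧
      (∀ i j : Fin n, εA (univGenH τ i j) = if i = j then 1 else 0) ∧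
      (ΔA.comp (Ideal.Quotient.mkₐ k (univIdealH τ)) =
        (Algebra.TensorProduct.map (Ideal.Quotient.mkₐ k (univIdealH τ))
          (Ideal.Quotient.mkₐ k (univIdealH τ))).comp (deltaM k n)) ∧
      (εA.comp (Ideal.Quotient.mkₐ k (univIdealH τ)) = epsM k n) ∧
      (∀ a : univAlgH τ,
        (TensorProduct.assoc k (univAlgH τ) (univAlgH τ) (univAlgH τ))
            ((TensorProduct.map ΔA.toLinearMap LinearMap.id) (ΔA a)) =
          (TensorProduct.map LinearMap.id ΔA.toLinearMap) (ΔA a)) ∧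
      (∀ a : univAlgH τ,
        (TensorProduct.lid k (univAlgH τ))
          ((TensorProduct.map εA.toLinearMap LinearMap.id) (ΔA a)) = a) ∧
      (∀ a : univAlgH τ,
        (TensorProduct.rid k (univAlgH τ))
          ((TensorProduct.map LinearMap.id εA.toLinearMap) (ΔA a)) = a) := by
  let _ := univAlgHBialgebra τ
  refine ⟨fun _ => deltaM_mem_of_mem_univIdealH τ, fun _ => epsM_eq_zero_of_mem_univIdealH τ,
    univAlgHComul τ, univAlgHCounit τ, univAlgHComul_univGenH τ, univAlgHCounit_univGenH τ,
    univAlgHComul_comp_mkₐ τ, univAlgHCounit_comp_mkₐ τ,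
    fun a => Coalgebra.coassoc_apply (R := k) (A := univAlgH τ) a, fun a => ?_, fun a => ?_⟩
  · exact (congrArg (TensorProduct.lid k (univAlgH τ))
      (Coalgebra.rTensor_counit_comul (R := k) (A := univAlgH τ) a)).trans (by simp)
  · exact (congrArg (TensorProduct.rid k (univAlgH τ))
      (Coalgebra.lTensor_counit_comul (R := k) (A := univAlgH τ) a)).trans (by simp)
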